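/- Let μ be a finite random cluster measure on a box with bond intensity a function p : E → [0,1], and let two measures μ₀ and μ₁ differ only in the intensity s assigned to a fixed subset Ξ of bonds (s = 0 vs s = p). Then for any event J, log μ₁(J) − log μ₀(J) = ∑_{b∈Ξ} ∫₀^p (1/(s(1−s)))·(μ_s(J·ω_b)/μ_s(J) − μ_s(ω_b)) ds, where μ_s is the measure with intensity s on Ξ. -/

import Mathlib

/-! For `0 < s < 1` every factor of the weight `w_s(ω)` that depends on `s` is `s` or `1 - s`,
so `d/ds w_s(ω) = w_s(ω) ∑_{b ∈ Ξ} (ω_b - s) / (s (1 - s))`. Summing over `ω ∈ J` and over all `ω`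
gives `d/ds log μ_s(J) = ∑_{b ∈ Ξ} (μ_s(ω_b | J) - μ_s(ω_b)) / (s (1 - s))`, and the theorem is the
fundamental theorem of calculus on `[0, p]`.

The singularity at `s = 0` is removable: the mass of `{ω_b = 1}` carries the factor `s` of bond `b`,
so each summand agrees on `(0, p]` with a function continuous on `[0, p]`. The masses stay positive on
`[0, p]` since a configuration in `J` of positive weight at `s = 0` has every bond of `Ξ` closed, and
its weight at `s` differs only by the factor `(1 - s) ^ #Ξ`. -/

open scoped BigOperators

/-- Unnormalized random cluster weight with bond intensities `pb`, cluster
weight `q` and cluster-count function `c`. -/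
noncomputable def rcWeight {E : Type*} [Fintype E] (pb : E → ℝ) (q : ℝ)
    (c : (E → Bool) → ℕ) (ω : E → Bool) : ℝ :=
  (∏ b : E, if ω b then pb b else 1 - pb b) * q ^ c ω

/-- Bond intensities equal to `s` on `Ξ` and `p` elsewhere. -/
def rcIntens {E : Type*} [DecidableEq E] (Ξ : Finset E) (p s : ℝ) : E → ℝ :=
  fun b => if b ∈ Ξ then s else p

/-- Partition function. -/
noncomputable def rcZ {E : Type*} [Fintype E] [DecidableEq E] (pb : E → ℝ) (q : ℝ)
    (c : (E → Bool) → ℕ) : ℝ :=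
  ∑ ω : E → Bool, rcWeight pb q c ω

/-- Random cluster probability of the event `J`. -/
noncomputable def rcProb {E : Type*} [Fintype E] [DecidableEq E] (pb : E → ℝ) (q : ℝ)
    (c : (E → Bool) → ℕ) (J : Finset (E → Bool)) : ℝ :=
  (∑ ω ∈ J, rcWeight pb q c ω) / rcZ pb q c

noncomputable def rcMass {E : Type*} [Fintype E] (pb : E → ℝ) (q : ℝ) (c : (E → Bool) → ℕ)
    (S : Finset (E → Bool)) : ℝ :=
  ∑ ω ∈ S, rcWeight pb q c ω

section Weights

variable {E : Type*} [Fintype E] {q : ℝ} {c : (E → Bool) → ℕ}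

lemma rcProb_eq_rcMass_div [DecidableEq E] (pb : E → ℝ) (S : Finset (E → Bool)) :
    rcProb pb q c S = rcMass pb q c S / rcMass pb q c Finset.univ :=
  rfl

lemma rcWeight_nonneg {pb : E → ℝ} (hpb : ∀ b, pb b ∈ Set.Icc 0 1) (hq : 0 ≤ q)
    (ω : E → Bool) : 0 ≤ rcWeight pb q c ω :=
  mul_nonneg (Finset.prod_nonneg fun b _ => by split_ifs <;> linarith [(hpb b).1, (hpb b).2])
    (pow_nonneg hq _)

lemma rcMass_le_rcMass_of_subset {pb : E → ℝ} (hpb : ∀ b, pb b ∈ Set.Icc 0 1) (hq : 0 ≤ q)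
    {S T : Finset (E → Bool)} (hST : S ⊆ T) : rcMass pb q c S ≤ rcMass pb q c T :=
  Finset.sum_le_sum_of_subset_of_nonneg hST fun ω _ _ => rcWeight_nonneg hpb hq ω

lemma rcMass_filter_eq_mul_update [DecidableEq E] (pb : E → ℝ) (b : E) (S : Finset (E → Bool)) :
    rcMass pb q c (S.filter fun ω => ω b = true) =
      pb b * rcMass (Function.update pb b 1) q c (S.filter fun ω => ω b = true) := by
  rw [rcMass, rcMass, Finset.mul_sum]
  refine Finset.sum_congr rfl fun ω hω => ?_
  have hωb : ω b = true := (Finset.mem_filter.mp hω).2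
  simp only [rcWeight, ← mul_assoc, Fintype.prod_eq_mul_prod_compl b, hωb, if_true,
    Function.update_self]
  rw [mul_one]
  congr 2
  refine Finset.prod_congr rfl fun b' hb' => ?_
  rw [Function.update_of_ne (by simpa using hb')]

lemma continuous_rcMass {pb : ℝ → E → ℝ} (hpb : ∀ b, Continuous fun s => pb s b)
    (S : Finset (E → Bool)) : Continuous fun s => rcMass (pb s) q c S := by
  refine continuous_finsetSum _ fun ω _ =>
    (continuous_finsetProd _ fun b _ => ?_).mul continuous_const
  exact Continuous.if_const _ (hpb b) (continuous_const.sub (hpb b))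

end Weights

section Intensities

lemma continuous_rcIntens_apply {E : Type*} [DecidableEq E] (Ξ : Finset E) (p : ℝ) (b : E) :
    Continuous fun s => rcIntens Ξ p s b := by
  unfold rcIntens
  split_ifs <;> fun_prop

lemma rcIntens_mem_Icc {E : Type*} [DecidableEq E] (Ξ : Finset E) {p s : ℝ}
    (hp : p ∈ Set.Icc 0 1) (hs : s ∈ Set.Icc 0 1) (b : E) : rcIntens Ξ p s b ∈ Set.Icc 0 1 := by
  unfold rcIntens
  split_ifs
  exacts [hs, hp]

variable {E : Type*} [Fintype E] [DecidableEq E] (Ξ : Finset E) (p : ℝ) {q : ℝ}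
  {c : (E → Bool) → ℕ}

lemma rcWeight_rcIntens_ne_zero {s : ℝ} (hs : s ≠ 1) {ω : E → Bool}
    (h : rcWeight (rcIntens Ξ p 0) q c ω ≠ 0) : rcWeight (rcIntens Ξ p s) q c ω ≠ 0 := by
  simp only [rcWeight, mul_ne_zero_iff, Finset.prod_ne_zero_iff, Finset.mem_univ,
    true_implies] at h ⊢
  refine ⟨fun b => ?_, h.2⟩
  have := h.1 b
  unfold rcIntens at this ⊢
  split_ifs at this ⊢ <;> simp_all [sub_ne_zero, Ne.symm hs]

lemma rcMass_rcIntens_pos {p : ℝ} (hp : p ∈ Set.Icc 0 1) (hq : 0 ≤ q) {s : ℝ}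
    (hs0 : 0 ≤ s) (hs1 : s < 1) {J : Finset (E → Bool)}
    (hJ : rcMass (rcIntens Ξ p 0) q c J ≠ 0) : 0 < rcMass (rcIntens Ξ p s) q c J := by
  have hpb := rcIntens_mem_Icc Ξ hp ⟨hs0, hs1.le⟩
  obtain ⟨ω, hωJ, hω⟩ := Finset.exists_ne_zero_of_sum_ne_zero hJ
  calc 0 < rcWeight (rcIntens Ξ p s) q c ω :=
        (rcWeight_nonneg hpb hq ω).lt_of_ne' (rcWeight_rcIntens_ne_zero Ξ p hs1.ne hω)
    _ ≤ rcMass (rcIntens Ξ p s) q c J :=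
        Finset.single_le_sum (fun ω _ => rcWeight_nonneg hpb hq ω) hωJ

end Intensities

lemma hasDerivAt_finsetProd_of_logDeriv {ι : Type*} [DecidableEq ι] (u : Finset ι)
    {f : ι → ℝ → ℝ} {g : ι → ℝ} {x : ℝ} (hf : ∀ i ∈ u, HasDerivAt (f i) (f i x * g i) x) :
    HasDerivAt (fun y => ∏ i ∈ u, f i y) ((∏ i ∈ u, f i x) * ∑ i ∈ u, g i) x := by
  refine (HasDerivAt.fun_finsetProd hf).congr_deriv ?_
  rw [Finset.mul_sum]
  refine Finset.sum_congr rfl fun i hi => ?_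
  rw [smul_eq_mul, ← mul_assoc, Finset.prod_erase_mul _ _ hi]

section Derivative

variable {E : Type*} [Fintype E] [DecidableEq E] (Ξ : Finset E) (p q : ℝ)
  (c : (E → Bool) → ℕ) {s : ℝ}

lemma hasDerivAt_rcWeight_rcIntens (hs0 : s ≠ 0) (hs1 : s ≠ 1) (ω : E → Bool) :
    HasDerivAt (fun t => rcWeight (rcIntens Ξ p t) q c ω)
      (rcWeight (rcIntens Ξ p s) q c ω *
        ∑ b ∈ Ξ, ((if ω b then 1 else 0) - s) / (s * (1 - s))) s := by
  have hfactor : ∀ b ∈ Finset.univ, HasDerivAt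
      (fun t => if ω b then rcIntens Ξ p t b else 1 - rcIntens Ξ p t b)
      ((if ω b then rcIntens Ξ p s b else 1 - rcIntens Ξ p s b) *
        if b ∈ Ξ then ((if ω b then 1 else 0) - s) / (s * (1 - s)) else 0) s := by
    intro b _
    unfold rcIntens
    by_cases hb : b ∈ Ξ <;> cases ω b <;>
      simp only [hb, if_true, if_false, Bool.false_eq_true, mul_zero]
    · exact ((hasDerivAt_id' s).const_sub 1).congr_deriv (by field_simp; ring)
    · exact (hasDerivAt_id' s).congr_deriv (by field_simp)
    · exact hasDerivAt_const s _
    · exact hasDerivAt_const s _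
  refine ((hasDerivAt_finsetProd_of_logDeriv _ hfactor).mul_const (q ^ c ω)).congr_deriv ?_
  rw [Finset.sum_ite_mem, Finset.univ_inter, rcWeight]
  ring

lemma hasDerivAt_rcMass_rcIntens (hs0 : s ≠ 0) (hs1 : s ≠ 1) (S : Finset (E → Bool)) :
    HasDerivAt (fun t => rcMass (rcIntens Ξ p t) q c S)
      (∑ b ∈ Ξ, (rcMass (rcIntens Ξ p s) q c (S.filter fun ω => ω b = true) -
        s * rcMass (rcIntens Ξ p s) q c S) / (s * (1 - s))) s := by
  refine (HasDerivAt.fun_sum fun ω _ =>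
    hasDerivAt_rcWeight_rcIntens Ξ p q c hs0 hs1 ω).congr_deriv ?_
  simp only [rcMass, Finset.mul_sum, Finset.sum_filter]
  rw [Finset.sum_comm]
  refine Finset.sum_congr rfl fun b _ => ?_
  rw [← Finset.sum_sub_distrib, Finset.sum_div]
  refine Finset.sum_congr rfl fun ω _ => ?_
  split_ifs <;> ring

noncomputable def rcLogDerivTerm (J : Finset (E → Bool)) (b : E) (s : ℝ) : ℝ :=
  1 / (s * (1 - s)) *
    (rcProb (rcIntens Ξ p s) q c (J.filter fun ω => ω b = true) / rcProb (rcIntens Ξ p s) q c J -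
      rcProb (rcIntens Ξ p s) q c (Finset.univ.filter fun ω => ω b = true))

lemma hasDerivAt_log_rcProb_rcIntens (hs0 : s ≠ 0) (hs1 : s ≠ 1) {J : Finset (E → Bool)}
    (hJ : rcMass (rcIntens Ξ p s) q c J ≠ 0) (hZ : rcMass (rcIntens Ξ p s) q c Finset.univ ≠ 0) :
    HasDerivAt (fun t => Real.log (rcProb (rcIntens Ξ p t) q c J))
      (∑ b ∈ Ξ, rcLogDerivTerm Ξ p q c J b s) s := by
  refine (((hasDerivAt_rcMass_rcIntens Ξ p q c hs0 hs1 J).div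
    (hasDerivAt_rcMass_rcIntens Ξ p q c hs0 hs1 Finset.univ) hZ).log
    (div_ne_zero hJ hZ)).congr_deriv ?_
  simp only [rcLogDerivTerm, rcProb_eq_rcMass_div]
  set W := rcMass (rcIntens Ξ p s) q c J
  set Z := rcMass (rcIntens Ξ p s) q c Finset.univ
  have hquot : ∀ A B : ℝ, (A * Z - W * B) / Z ^ 2 / (W / Z) = A / W - B / Z := fun A B => by
    field_simp
  rw [Pi.div_apply, hquot, Finset.sum_div, Finset.sum_div, ← Finset.sum_sub_distrib]
  refine Finset.sum_congr rfl fun b _ => ?_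
  field_simp
  ring

end Derivative

section Integrability

variable {E : Type*} [Fintype E] [DecidableEq E] (Ξ : Finset E) (p q : ℝ)
  (c : (E → Bool) → ℕ) {J : Finset (E → Bool)} {b : E}

lemma rcLogDerivTerm_eq (hb : b ∈ Ξ) {s : ℝ} (hs0 : s ≠ 0)
    (hJ : rcMass (rcIntens Ξ p s) q c J ≠ 0) (hZ : rcMass (rcIntens Ξ p s) q c Finset.univ ≠ 0) :
    rcLogDerivTerm Ξ p q c J b s = 1 / (1 - s) *
      (rcMass (Function.update (rcIntens Ξ p s) b 1) q c (J.filter fun ω => ω b = true) /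
          rcMass (rcIntens Ξ p s) q c J -
        rcMass (Function.update (rcIntens Ξ p s) b 1) q c
            (Finset.univ.filter fun ω => ω b = true) /
          rcMass (rcIntens Ξ p s) q c Finset.univ) := by
  have hsb : rcIntens Ξ p s b = s := if_pos hb
  rw [rcLogDerivTerm, rcProb_eq_rcMass_div, rcProb_eq_rcMass_div, rcProb_eq_rcMass_div,
    rcMass_filter_eq_mul_update _ b J, rcMass_filter_eq_mul_update _ b Finset.univ, hsb]
  field_simp

lemma intervalIntegrable_rcLogDerivTerm (hb : b ∈ Ξ) {r : ℝ} (hr0 : 0 ≤ r) (hr1 : r < 1)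
    (hJ : ∀ s ∈ Set.Icc 0 r, rcMass (rcIntens Ξ p s) q c J ≠ 0)
    (hZ : ∀ s ∈ Set.Icc 0 r, rcMass (rcIntens Ξ p s) q c Finset.univ ≠ 0) :
    IntervalIntegrable (rcLogDerivTerm Ξ p q c J b) MeasureTheory.volume 0 r := by
  have hcoord : ∀ b', Continuous fun s => Function.update (rcIntens Ξ p s) b 1 b' := fun b' => by
    simp only [Function.update_apply]
    split_ifs
    exacts [continuous_const, continuous_rcIntens_apply Ξ p b']
  have h1s : ∀ s ∈ Set.Icc 0 r, 1 - s ≠ 0 := fun s hs => by linarith [hs.2]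
  have hcont : ContinuousOn (fun s => 1 / (1 - s) *
      (rcMass (Function.update (rcIntens Ξ p s) b 1) q c (J.filter fun ω => ω b = true) /
          rcMass (rcIntens Ξ p s) q c J -
        rcMass (Function.update (rcIntens Ξ p s) b 1) q c
            (Finset.univ.filter fun ω => ω b = true) /
          rcMass (rcIntens Ξ p s) q c Finset.univ)) (Set.Icc 0 r) := by
    have hW := continuous_rcMass (q := q) (c := c) (continuous_rcIntens_apply Ξ p)
    have hV := continuous_rcMass (q := q) (c := c) hcoord
    refine (continuousOn_const.div (continuousOn_const.sub continuousOn_id) h1s).mul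
      (ContinuousOn.sub ?_ ?_)
    exacts [(hV _).continuousOn.div (hW _).continuousOn hJ,
      (hV _).continuousOn.div (hW _).continuousOn hZ]
  refine (hcont.intervalIntegrable_of_Icc hr0).congr fun s hs => ?_
  rw [Set.uIoc_of_le hr0] at hs
  have hs' : s ∈ Set.Icc 0 r := Set.Ioc_subset_Icc_self hs
  exact (rcLogDerivTerm_eq Ξ p q c hb hs.1.ne' (hJ s hs') (hZ s hs')).symm

end Integrability

/-- Interpolation of boundary conditions: for the random cluster measures μ_s
with intensity s on the boundary bonds Ξ and p elsewhere,
log μ_p(J) − log μ_0(J) = ∑_{b∈Ξ} ∫₀^p (1/(s(1−s)))·(μ_s(J, ω_b)/μ_s(J) − μ_s(ω_b)) ds. -/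
theorem stmt18 {E : Type*} [Fintype E] [DecidableEq E] (Ξ : Finset E) (p q : ℝ)
    (hp0 : 0 < p) (hp1 : p < 1) (hq : 1 ≤ q)
    (c : (E → Bool) → ℕ) (J : Finset (E → Bool))
    (hpos : 0 < ∑ ω ∈ J, rcWeight (rcIntens Ξ p 0) q c ω) :
    Real.log (rcProb (rcIntens Ξ p p) q c J) - Real.log (rcProb (rcIntens Ξ p 0) q c J) =
      ∑ b ∈ Ξ, ∫ s in (0 : ℝ)..p, (1 / (s * (1 - s))) *
        (rcProb (rcIntens Ξ p s) q c (J.filter fun ω => ω b = true) /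
            rcProb (rcIntens Ξ p s) q c J -
          rcProb (rcIntens Ξ p s) q c (Finset.univ.filter fun ω => ω b = true)) := by
  have hp : p ∈ Set.Icc 0 1 := ⟨hp0.le, hp1.le⟩
  have hJ : ∀ s ∈ Set.Icc 0 p, 0 < rcMass (rcIntens Ξ p s) q c J := fun s hs =>
    rcMass_rcIntens_pos Ξ hp (by linarith) hs.1 (hs.2.trans_lt hp1) hpos.ne'
  have hZ : ∀ s ∈ Set.Icc 0 p, 0 < rcMass (rcIntens Ξ p s) q c Finset.univ := fun s hs =>
    (hJ s hs).trans_le <| rcMass_le_rcMass_of_subset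
      (rcIntens_mem_Icc Ξ hp ⟨hs.1, hs.2.trans hp.2⟩) (by linarith) J.subset_univ
  have hcont : ContinuousOn (fun s => Real.log (rcProb (rcIntens Ξ p s) q c J)) (Set.Icc 0 p) :=
    ((continuous_rcMass (continuous_rcIntens_apply Ξ p) J).continuousOn.div
      (continuous_rcMass (continuous_rcIntens_apply Ξ p) _).continuousOn
      fun s hs => (hZ s hs).ne').log fun s hs => (div_pos (hJ s hs) (hZ s hs)).ne'
  have hderiv : ∀ s ∈ Set.Ioo 0 p, HasDerivAt (fun t => Real.log (rcProb (rcIntens Ξ p t) q c J))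
      (∑ b ∈ Ξ, rcLogDerivTerm Ξ p q c J b s) s := fun s hs =>
    hasDerivAt_log_rcProb_rcIntens Ξ p q c hs.1.ne' (hs.2.trans hp1).ne
      (hJ s (Set.Ioo_subset_Icc_self hs)).ne' (hZ s (Set.Ioo_subset_Icc_self hs)).ne'
  have hint : ∀ b ∈ Ξ, IntervalIntegrable (rcLogDerivTerm Ξ p q c J b) MeasureTheory.volume 0 p :=
    fun b hb => intervalIntegrable_rcLogDerivTerm Ξ p q c hb hp0.le hp1
      (fun s hs => (hJ s hs).ne') fun s hs => (hZ s hs).ne'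
  show _ = ∑ b ∈ Ξ, ∫ s in (0 : ℝ)..p, rcLogDerivTerm Ξ p q c J b s
  rw [← intervalIntegral.integral_finsetSum hint]
  exact (intervalIntegral.integral_eq_sub_of_hasDerivAt_of_le hp0.le hcont hderiv
    (by simpa only [Finset.sum_fn] using IntervalIntegrable.sum Ξ hint)).symm
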